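/- Let D be an integral domain. If D is quasi-Prüfer, then every upper to zero Q in D[X] satisfies c(Q) = D; conversely, if every upper to zero in D[X] contains a polynomial of unit content, then D is quasi-Prüfer. -/

import Mathlib

open Polynomial


/-- The content ideal of a polynomial: the ideal generated by its coefficients. -/
def contentIdeal {D : Type*} [CommRing D] (f : Polynomial D) : Ideal D :=
  Ideal.span {a : D | ∃ n : ℕ, f.coeff n = a}

/-- The content ideal of an ideal of polynomials. -/
def contentIdealOfIdeal {D : Type*} [CommRing D] (J : Ideal (Polynomial D)) : Ideal D :=
  Ideal.span {a : D | ∃ f ∈ J, ∃ n : ℕ, Polynomial.coeff f n = a}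

lemma exists_pseudo_div {D : Type*} [CommRing D] [IsDomain D] (f : D[X]) (hf : f ≠ 0)
    (h : D[X]) : ∃ (m : ℕ) (q r : D[X]),
      C f.leadingCoeff ^ m * h = f * q + r ∧ r.degree < f.degree := by
  have ha : f.leadingCoeff ≠ 0 := leadingCoeff_ne_zero.mpr hf
  have hbot : (⊥ : WithBot ℕ) < f.degree := by
    simpa [bot_lt_iff_ne_bot, degree_eq_bot] using hf
  by_cases hf0 : f.natDegree = 0
  · refine ⟨1, h, 0, ?_, by simpa using hbot⟩
    rw [Polynomial.eq_C_of_natDegree_eq_zero hf0] at *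
    simp [pow_one, mul_comm]
  · -- deg f ≥ 1
    suffices H : ∀ n : ℕ, ∀ h : D[X], h.natDegree ≤ n → ∃ (m : ℕ) (q r : D[X]),
        C f.leadingCoeff ^ m * h = f * q + r ∧ r.degree < f.degree from
      H h.natDegree h le_rfl
    intro n
    induction n with
    | zero =>
      intro h hn
      by_cases hdeg : h.degree < f.degree
      · exact ⟨0, 0, h, by ring, hdeg⟩
      · exfalso
        apply hf0
        have : f.natDegree ≤ h.natDegree := natDegree_le_natDegree (not_lt.mp hdeg)
        omega
    | succ n IH =>
      intro h hn
      by_cases h0 : h = 0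
      · exact ⟨0, 0, 0, by simp [h0], by simpa using hbot⟩
      by_cases hdeg : h.degree < f.degree
      · exact ⟨0, 0, h, by ring, hdeg⟩
      push_neg at hdeg
      have hb : h.leadingCoeff ≠ 0 := leadingCoeff_ne_zero.mpr h0
      have hnat : f.natDegree ≤ h.natDegree := natDegree_le_natDegree hdeg
      set k := h.natDegree - f.natDegree with hk
      set h' := C f.leadingCoeff * h - C h.leadingCoeff * X ^ k * f with hh'
      have hdeq : (C f.leadingCoeff * h).degree = (C h.leadingCoeff * X ^ k * f).degree := by
        rw [degree_mul, degree_mul, degree_mul, degree_C ha, degree_C hb, degree_X_pow,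
          degree_eq_natDegree h0, degree_eq_natDegree hf, zero_add, zero_add]
        rw [← Nat.cast_add]
        exact_mod_cast (Nat.sub_add_cancel hnat).symm
      have hlc : (C f.leadingCoeff * h).leadingCoeff
          = (C h.leadingCoeff * X ^ k * f).leadingCoeff := by
        rw [leadingCoeff_mul, leadingCoeff_mul, leadingCoeff_mul, leadingCoeff_C,
          leadingCoeff_C, leadingCoeff_X_pow]
        ring
      have hne : C f.leadingCoeff * h ≠ 0 := mul_ne_zero (by simpa using ha) h0
      have hlt : h'.degree < h.degree := by
        have := degree_sub_lt hdeq hne hlc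
        rwa [degree_mul, degree_C ha, zero_add] at this
      have hlt' : h'.natDegree ≤ n := by
        rcases eq_or_ne h' 0 with h'' | h''
        · simp [h'']
        · have := natDegree_lt_natDegree h'' hlt
          omega
      obtain ⟨m, q, r, heq, hr⟩ := IH h' hlt'
      refine ⟨m + 1, q + C f.leadingCoeff ^ m * C h.leadingCoeff * X ^ k, r, ?_, hr⟩
      rw [hh'] at heq
      linear_combination heq

/-- quasi-Prüfer implies every upper to zero has content `D`; conversely if every
upper to zero contains a polynomial of unit content, then `D` is quasi-Prüfer.
(Here quasi-Prüfer is taken in the form: every prime `Q` of `D[X]` with proper content is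
extended from `D`.) -/
theorem quasiPrufer_content_upper_to_zero
    (D : Type*) [CommRing D] [IsDomain D] :
    ((∀ Q : Ideal (Polynomial D), Q.IsPrime → contentIdealOfIdeal Q ≠ ⊤ →
        Q = Ideal.map (Polynomial.C : D →+* Polynomial D)
          (Q.comap (Polynomial.C : D →+* Polynomial D))) →
      ∀ Q : Ideal (Polynomial D), Q.IsPrime → Q ≠ ⊥ →
        Q.comap (Polynomial.C : D →+* Polynomial D) = ⊥ →
        contentIdealOfIdeal Q = ⊤) ∧
    ((∀ Q : Ideal (Polynomial D), Q.IsPrime → Q ≠ ⊥ →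
        Q.comap (Polynomial.C : D →+* Polynomial D) = ⊥ →
        ∃ g ∈ Q, _root_.contentIdeal g = ⊤) →
      ∀ Q : Ideal (Polynomial D), Q.IsPrime → contentIdealOfIdeal Q ≠ ⊤ →
        Q = Ideal.map (Polynomial.C : D →+* Polynomial D)
          (Q.comap (Polynomial.C : D →+* Polynomial D))) := by
  classical
  constructor
  · intro hyp Q hQ hne hcomap
    by_contra hc
    have h := hyp Q hQ hc
    rw [hcomap, Ideal.map_bot] at h
    exact hne h
  · intro hyp Q hQ hc
    set P := Q.comap (Polynomial.C : D →+* Polynomial D) with hP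
    refine le_antisymm ?_ Ideal.map_comap_le
    by_contra hQP
    -- there is f ∈ Q not in P[X]
    apply hc
    have hex : ∃ n : ℕ, ∃ f : D[X], f ∈ Q ∧ f ∉ Ideal.map (C : D →+* D[X]) P ∧
        f.natDegree = n := by
      obtain ⟨f, hf1, hf2⟩ := SetLike.not_le_iff_exists.mp hQP
      exact ⟨f.natDegree, f, hf1, hf2, rfl⟩
    obtain ⟨f, hfQ, hfP, hfdeg⟩ := Nat.find_spec hex
    set n₀ := Nat.find hex with hn₀def
    have hf0 : f ≠ 0 := fun h => hfP (h ▸ (Ideal.map (C : D →+* D[X]) P).zero_mem)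
    -- n₀ ≥ 1
    have hn₀ : 0 < f.natDegree := by
      rcases Nat.eq_zero_or_pos f.natDegree with h | h
      swap
      · exact h
      · exfalso
        have hfc : f = C (f.coeff 0) := Polynomial.eq_C_of_natDegree_eq_zero h
        have : f.coeff 0 ∈ P := by
          rw [hP, Ideal.mem_comap]; rwa [← hfc]
        exact hfP (hfc ▸ Ideal.mem_map_of_mem _ this)
    -- leading coefficient not in P
    have haP : f.leadingCoeff ∉ P := by
      intro haP
      have hCa : (C f.leadingCoeff : D[X]) ∈ Q := Ideal.mem_comap.mp haP
      have he : f.eraseLead = f - C f.leadingCoeff * X ^ f.natDegree :=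
        (Polynomial.self_sub_C_mul_X_pow f).symm
      have h1 : f.eraseLead ∈ Q := by
        rw [he]; exact Ideal.sub_mem Q hfQ (Ideal.mul_mem_right _ Q hCa)
      have h2 : f.eraseLead ∉ Ideal.map (C : D →+* D[X]) P := by
        intro hmem
        apply hfP
        have : C f.leadingCoeff * X ^ f.natDegree ∈ Ideal.map (C : D →+* D[X]) P :=
          Ideal.mul_mem_right _ _ (Ideal.mem_map_of_mem _ haP)
        have := Ideal.add_mem _ hmem this
        rwa [he, sub_add_cancel] at this
      have h3 : f.eraseLead.natDegree < n₀ := by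
        rcases f.eraseLead_natDegree_lt_or_eraseLead_eq_zero with h | h
        · omega
        · rw [h]; simp only [Polynomial.natDegree_zero]; omega
      exact Nat.find_min hex h3 ⟨f.eraseLead, h1, h2, rfl⟩
    have haQ : (C f.leadingCoeff : D[X]) ∉ Q := fun h => haP (Ideal.mem_comap.mpr h)
    -- pass to the fraction field
    set K := FractionRing D
    set φ : D[X] →+* K[X] := Polynomial.mapRingHom (algebraMap D K) with hφ
    have hinjK : Function.Injective (algebraMap D K) := IsFractionRing.injective D K
    have hinj : Function.Injective φ := Polynomial.map_injective _ hinjK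
    -- Step B : contraction of span (φ f) is contained in Q
    have stepB : ∀ h : D[X], φ f ∣ φ h → h ∈ Q := by
      intro h hdvd
      obtain ⟨m, q, r, heq, hr⟩ := exists_pseudo_div f hf0 h
      have hrd : φ f ∣ φ r := by
        have : r = C f.leadingCoeff ^ m * h - f * q := by linear_combination -heq
        rw [this, map_sub, map_mul, map_mul]
        exact dvd_sub (Dvd.dvd.mul_left hdvd _) (Dvd.dvd.mul_right dvd_rfl _)
      have hr0 : r = 0 := by
        apply hinj
        rw [map_zero]
        refine Polynomial.eq_zero_of_dvd_of_degree_lt hrd ?_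
        calc (φ r).degree ≤ r.degree := by
              simpa [hφ, Polynomial.coe_mapRingHom] using Polynomial.degree_map_le
          _ < f.degree := hr
          _ = (φ f).degree := by
              rw [hφ, Polynomial.coe_mapRingHom,
                Polynomial.degree_map_eq_of_injective hinjK]
      have hmem : C f.leadingCoeff ^ m * h ∈ Q := by
        rw [heq, hr0, add_zero]; exact Ideal.mul_mem_right _ _ hfQ
      rcases hQ.mem_or_mem hmem with h1 | h1
      · exact absurd (hQ.mem_of_pow_mem m h1) haQ
      · exact h1
    -- choose a prime factor g of φ f whose contraction lies in Q
    have hFne : φ f ≠ 0 := fun h => hf0 (hinj (by rw [h, map_zero]))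
    have key : ∃ g ∈ UniqueFactorizationMonoid.factors (φ f),
        (Ideal.span {g}).comap φ ≤ Q := by
      by_contra hcon
      push_neg at hcon
      choose! w hw1 hw2 using
        fun g (hg : g ∈ UniqueFactorizationMonoid.factors (φ f)) =>
          SetLike.not_le_iff_exists.mp (hcon g hg)
      set H := ((UniqueFactorizationMonoid.factors (φ f)).map w).prod with hH
      have hdvd : φ f ∣ φ H := by
        have h1 : (UniqueFactorizationMonoid.factors (φ f)).prod ∣
            ((UniqueFactorizationMonoid.factors (φ f)).map (fun g => φ (w g))).prod := by
          have := Multiset.prod_dvd_prod_of_dvd (S := UniqueFactorizationMonoid.factors (φ f))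
            id (fun g => φ (w g)) (fun g hg => by
              simpa using Ideal.mem_span_singleton.mp (hw1 g hg))
          simpa using this
        have h2 : φ H = ((UniqueFactorizationMonoid.factors (φ f)).map
            (fun g => φ (w g))).prod := by
          rw [hH, map_multiset_prod, Multiset.map_map]; rfl
        rw [h2]
        exact dvd_trans ((UniqueFactorizationMonoid.factors_prod hFne).symm.dvd) h1
      have hHQ : H ∈ Q := stepB H hdvd
      obtain ⟨p, hp1, hp2⟩ :=
        (hQ.multiset_prod_mem_iff_exists_mem _).mp hHQ
      obtain ⟨g, hg, rfl⟩ := Multiset.mem_map.mp hp1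
      exact hw2 g hg hp2
    obtain ⟨g, hgfac, hgle⟩ := key
    have hgprime : Prime g := UniqueFactorizationMonoid.prime_of_factor g hgfac
    haveI hsp : (Ideal.span {g}).IsPrime :=
      (Ideal.span_singleton_prime hgprime.ne_zero).mpr hgprime
    set Q₁ := (Ideal.span {g}).comap φ with hQ₁
    have hQ₁prime : Q₁.IsPrime := Ideal.IsPrime.comap φ
    have hfQ₁ : f ∈ Q₁ := by
      rw [hQ₁, Ideal.mem_comap, Ideal.mem_span_singleton]
      exact UniqueFactorizationMonoid.dvd_of_mem_factors hgfac
    have hQ₁ne : Q₁ ≠ ⊥ := fun hb => hf0 (by simpa [hb, Ideal.mem_bot] using hfQ₁)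
    have hQ₁comap : Q₁.comap (C : D →+* D[X]) = ⊥ := by
      rw [eq_bot_iff]
      intro d hd
      rw [Ideal.mem_comap, hQ₁, Ideal.mem_comap, Ideal.mem_span_singleton] at hd
      have hd' : g ∣ C (algebraMap D K d) := by
        simpa [hφ, Polynomial.map_C] using hd
      rw [Ideal.mem_bot]
      by_contra hd0
      have he0 : algebraMap D K d ≠ 0 := fun h => hd0 (hinjK (by simpa using h))
      exact hgprime.not_isUnit
        (isUnit_of_dvd_unit hd' (Polynomial.isUnit_C.mpr (isUnit_iff_ne_zero.mpr he0)))
    obtain ⟨g', hg'Q₁, hg'c⟩ := hyp Q₁ hQ₁prime hQ₁ne hQ₁comap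
    have hg'Q : g' ∈ Q := hgle hg'Q₁
    have hle : _root_.contentIdeal g' ≤ contentIdealOfIdeal Q := by
      apply Ideal.span_mono
      rintro a ⟨n, hn⟩
      exact ⟨g', hg'Q, n, hn⟩
    rw [hg'c] at hle
    exact top_le_iff.mp hle
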